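/- arXiv:1401.2863 — 10 statements merged into one kernel-verified Lean document; each statement's English description precedes it below -/
import Mathlib

section
/- If S is a finite subset of a group G containing the identity and |S| = |S^2|, then S is a subgroup of G. -/
/-!
Since `1 ∈ S`, we have `S ⊆ S * S`, and equal finite cardinalities force `S * S = S`. So for
`a ∈ S` the translate `a • S` lies in `S`; having the same size, it is all of `S`, hence contains
`1`, which puts `a⁻¹` in `S`.
-/

open Pointwise

theorem Set.mul_self_eq_of_one_mem_of_ncard_le {M : Type*} [MulOneClass M] {S : Set M}
    (hfin : S.Finite) (h1 : (1 : M) ∈ S) (hcard : (S * S).ncard ≤ S.ncard) : S * S = S :=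
  (Set.eq_of_subset_of_ncard_le (Set.subset_mul_left S h1) hcard (hfin.mul hfin)).symm

theorem Set.smul_set_eq_of_smul_set_subset {G α : Type*} [Group G] [MulAction G α] {S : Set α}
    {a : G} (hfin : S.Finite) (h : a • S ⊆ S) : a • S = S :=
  Set.eq_of_subset_of_ncard_le h (Set.ncard_smul_set a S).ge hfin

theorem Set.inv_mem_of_mul_subset {G : Type*} [Group G] {S : Set G} (hfin : S.Finite)
    (h1 : (1 : G) ∈ S) (hmul : S * S ⊆ S) {a : G} (ha : a ∈ S) : a⁻¹ ∈ S := by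
  have hone : (1 : G) ∈ a • S := by
    rwa [Set.smul_set_eq_of_smul_set_subset hfin ((Set.smul_set_subset_mul ha).trans hmul)]
  obtain ⟨s, hs, has⟩ := Set.mem_smul_set.mp hone
  rwa [inv_eq_of_mul_eq_one_right has]

def Subgroup.ofFiniteOfMulSubset {G : Type*} [Group G] {S : Set G} (hfin : S.Finite)
    (h1 : (1 : G) ∈ S) (hmul : S * S ⊆ S) : Subgroup G where
  carrier := S
  mul_mem' ha hb := hmul (Set.mul_mem_mul ha hb)
  one_mem' := h1
  inv_mem' := Set.inv_mem_of_mul_subset hfin h1 hmul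

theorem stmt0 {G : Type*} [Group G] (S : Set G) (hfin : S.Finite) (h1 : (1 : G) ∈ S)
    (hcard : (S * S).ncard = S.ncard) :
    ∃ H : Subgroup G, (H : Set G) = S :=
  ⟨Subgroup.ofFiniteOfMulSubset hfin h1
    (Set.mul_self_eq_of_one_mem_of_ncard_le hfin h1 hcard.le).subset, rfl⟩
end

section
/- Let H be a subgroup of a group G, x ∈ G, and suppose HxH = Hx⁻¹H. Then there exists y ∈ Hx with y² ∈ H such that HyH = HxH, y⁻¹Hy = x⁻¹Hx, and ⟨H, y⟩ = ⟨H, x⟩. -/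
/-!
Since `x⁻¹ ∈ HxH`, write `x⁻¹ = a x b` with `a, b ∈ H` and take `y = a x`. Then
`y² = a x · x⁻¹ b⁻¹ = a b⁻¹ ∈ H`, and left multiplication of `x` by an element of `H` changes
neither the double coset `HxH`, nor the conjugate `x⁻¹Hx`, nor the subgroup `⟨H, x⟩`.
-/

open Pointwise DoubleCoset

namespace Subgroup

variable {G : Type*} [Group G] (H : Subgroup G)

lemma exists_eq_mul_mul_of_doubleCoset_inv_eq {x : G}
    (h : doubleCoset x⁻¹ (H : Set G) H = doubleCoset x H H) :
    ∃ a ∈ H, ∃ b ∈ H, x⁻¹ = a * x * b :=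
  mem_doubleCoset.mp (h ▸ mem_doubleCoset_self H H x⁻¹)

variable {H} {a : G}

lemma doubleCoset_mul_left_of_mem (ha : a ∈ H) (x : G) :
    doubleCoset (a * x) (H : Set G) H = doubleCoset x H H :=
  doubleCoset_eq_of_mem (mem_doubleCoset.mpr ⟨a, ha, 1, H.one_mem, (mul_one _).symm⟩)

lemma image_conj_mul_left_of_mem (ha : a ∈ H) (x : G) :
    (fun g => (a * x)⁻¹ * g * (a * x)) '' (H : Set G) = (fun g => x⁻¹ * g * x) '' H := by
  ext z
  constructor
  · rintro ⟨g, hg, rfl⟩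
    exact ⟨a⁻¹ * g * a, mul_mem (mul_mem (inv_mem ha) hg) ha, by group⟩
  · rintro ⟨g, hg, rfl⟩
    exact ⟨a * g * a⁻¹, mul_mem (mul_mem ha hg) (inv_mem ha), by group⟩

lemma sup_zpowers_mul_left_of_mem (ha : a ∈ H) (x : G) :
    H ⊔ zpowers (a * x) = H ⊔ zpowers x := by
  apply le_antisymm <;> refine sup_le le_sup_left (zpowers_le.mpr ?_)
  · exact mul_mem (mem_sup_left ha) (mem_sup_right (mem_zpowers x))
  · simpa using mul_mem (mem_sup_left (inv_mem ha)) (mem_sup_right (mem_zpowers (a * x)))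

lemma mul_sq_mem_of_inv_eq_mul_mul {b x : G} (ha : a ∈ H) (hb : b ∈ H)
    (hx : x⁻¹ = a * x * b) : (a * x) ^ 2 ∈ H := by
  have hsq : (a * x) ^ 2 = a * b⁻¹ :=
    calc (a * x) ^ 2 = a * x * (a * x * b) * b⁻¹ := by simp [sq, mul_assoc]
      _ = a * b⁻¹ := by rw [← hx]; group
  exact hsq ▸ mul_mem ha (inv_mem hb)

end Subgroup

open Subgroup in
theorem stmt5 {G : Type*} [Group G] (H : Subgroup G) (x : G)
    (h : (H : Set G) * {x} * (H : Set G) = (H : Set G) * {x⁻¹} * (H : Set G)) :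
    ∃ y ∈ (H : Set G) * {x}, y ^ 2 ∈ H ∧
      (H : Set G) * {y} * (H : Set G) = (H : Set G) * {x} * (H : Set G) ∧
      (fun g => y⁻¹ * g * y) '' (H : Set G) = (fun g => x⁻¹ * g * x) '' (H : Set G) ∧
      H ⊔ Subgroup.zpowers y = H ⊔ Subgroup.zpowers x := by
  obtain ⟨a, ha, b, hb, hx⟩ := exists_eq_mul_mul_of_doubleCoset_inv_eq H h.symm
  exact ⟨a * x, Set.mul_mem_mul ha rfl, mul_sq_mem_of_inv_eq_mul_mul ha hb hx,
    doubleCoset_mul_left_of_mem ha x, image_conj_mul_left_of_mem ha x,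
    sup_zpowers_mul_left_of_mem ha x⟩
end

section
/- Let H be a proper subgroup of a finite group K, let x ∈ K with x² ∈ H, and set S = H ∪ {x, x⁻¹}. Then S³ = H ∪ HxH ∪ x⁻¹Hx. -/
open Pointwise

/-!
Write `T = {x, x⁻¹}`. Since `x² ∈ H`, any product of two elements of `T` lies in `H`; in particular
every `t ∈ T` is `(t x⁻¹) x ∈ H x`. Hence a triple product from `S = H ∪ T` lies in `H` or in `HxH`,
except when it has the shape `t h t'` with `t, t' ∈ T`, which is `x⁻¹ (x t) h (t' x⁻¹) x ∈ x⁻¹ H x`.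
-/

namespace Subgroup

variable {G : Type*} [Group G] {H : Subgroup G} {x : G}

lemma mul_mem_of_mem_pair (hx2 : x ^ 2 ∈ H) {a b : G} (ha : a ∈ ({x, x⁻¹} : Set G))
    (hb : b ∈ ({x, x⁻¹} : Set G)) : a * b ∈ H := by
  have hinv : x⁻¹ * x⁻¹ ∈ H := by simpa [pow_two, mul_inv_rev] using H.inv_mem hx2
  rcases ha with rfl | rfl <;> rcases hb with rfl | rfl
  · rwa [← pow_two]
  · simp
  · simp
  · exact hinv

lemma mul_mul_mem_doubleCoset (hx2 : x ^ 2 ∈ H) {h₁ a h₂ : G} (h₁_mem : h₁ ∈ H)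
    (ha : a ∈ ({x, x⁻¹} : Set G)) (h₂_mem : h₂ ∈ H) :
    h₁ * a * h₂ ∈ (H : Set G) * {x} * H := by
  have hax : a * x⁻¹ ∈ H := mul_mem_of_mem_pair hx2 ha (Or.inr rfl)
  have hrw : h₁ * a * h₂ = (h₁ * (a * x⁻¹)) * x * h₂ := by group
  rw [hrw]
  exact Set.mul_mem_mul (Set.mul_mem_mul (mul_mem h₁_mem hax) rfl) h₂_mem

lemma mul_mul_mem_conj (hx2 : x ^ 2 ∈ H) {a h c : G} (ha : a ∈ ({x, x⁻¹} : Set G))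
    (h_mem : h ∈ H) (hc : c ∈ ({x, x⁻¹} : Set G)) :
    a * h * c ∈ (fun g => x⁻¹ * g * x) '' (H : Set G) := by
  refine ⟨(x * a) * h * (c * x⁻¹), ?_, by group⟩
  exact mul_mem (mul_mem (mul_mem_of_mem_pair hx2 (Or.inl rfl) ha) h_mem)
    (mul_mem_of_mem_pair hx2 hc (Or.inr rfl))

end Subgroup

open Subgroup in
theorem stmt6_general {K : Type*} [Group K] (H : Subgroup K)
    (x : K) (hx2 : x ^ 2 ∈ H) :
    ((H : Set K) ∪ {x, x⁻¹}) * ((H : Set K) ∪ {x, x⁻¹}) * ((H : Set K) ∪ {x, x⁻¹}) =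
      (H : Set K) ∪ (H : Set K) * {x} * (H : Set K) ∪
        (fun g => x⁻¹ * g * x) '' (H : Set K) := by
  apply Set.Subset.antisymm
  · rintro _ ⟨_, ⟨a, ha, b, hb, rfl⟩, c, hc, rfl⟩
    show a * b * c ∈ _
    rcases ha with ha | ha <;> rcases hb with hb | hb <;> rcases hc with hc | hc
    · exact .inl (.inl (mul_mem (mul_mem ha hb) hc))
    · simpa using Or.inl (Or.inr (mul_mul_mem_doubleCoset hx2 (mul_mem ha hb) hc H.one_mem))
    · exact .inl (.inr (mul_mul_mem_doubleCoset hx2 ha hb hc))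
    · exact .inl (.inl (by rw [mul_assoc]; exact mul_mem ha (mul_mem_of_mem_pair hx2 hb hc)))
    · simpa [mul_assoc] using
        Or.inl (Or.inr (mul_mul_mem_doubleCoset hx2 H.one_mem ha (mul_mem hb hc)))
    · exact .inr (mul_mul_mem_conj hx2 ha hb hc)
    · exact .inl (.inl (mul_mem (mul_mem_of_mem_pair hx2 ha hb) hc))
    · simpa using Or.inl (Or.inr
        (mul_mul_mem_doubleCoset hx2 (mul_mem_of_mem_pair hx2 ha hb) hc H.one_mem))
  · rintro g ((hg | ⟨_, ⟨h₁, hh₁, _, rfl, rfl⟩, h₂, hh₂, rfl⟩) | ⟨h, hh, rfl⟩)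
    · have h1 : (1 : K) ∈ (H : Set K) ∪ {x, x⁻¹} := .inl H.one_mem
      rw [← mul_one g, ← mul_one (g * 1)]
      exact Set.mul_mem_mul (Set.mul_mem_mul (.inl hg) h1) h1
    · exact Set.mul_mem_mul (Set.mul_mem_mul (Or.inl hh₁) (Or.inr (Or.inl rfl))) (Or.inl hh₂)
    · exact Set.mul_mem_mul (Set.mul_mem_mul (Or.inr (Or.inr rfl)) (Or.inl hh))
        (Or.inr (Or.inl rfl))

theorem stmt6 {K : Type*} [Group K] [Finite K] (H : Subgroup K) (hH : H ≠ ⊤)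
    (x : K) (hx : x ∉ H) (hx2 : x ^ 2 ∈ H) :
    ((H : Set K) ∪ {x, x⁻¹}) * ((H : Set K) ∪ {x, x⁻¹}) * ((H : Set K) ∪ {x, x⁻¹}) =
      (H : Set K) ∪ (H : Set K) * {x} * (H : Set K) ∪
        (fun g => x⁻¹ * g * x) '' (H : Set K) :=
  stmt6_general H x hx2
end

section
/- Let H be a proper subgroup of a finite group K, x ∈ K with x² ∈ H, let L = H ∩ x⁻¹Hx, S = H ∪ {x, x⁻¹}, and T = H ∪ xL. Then x⁻¹Lx = L and T³ = S³. -/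
/-!
Conjugation `c g = x⁻¹ g x` is injective and `c ∘ c` is conjugation by `x⁻²`, which fixes `H`;
hence `c (H ∩ c H) = c H ∩ H`. For the triple products, every element of `xL` lies in both `xH`
and `Hx` (as `L ⊆ H ∩ x⁻¹Hx`), and `xL · xL ⊆ Hx · xH = H`. Multiplying out `(H ∪ xL)³` then
lands every product in `H`, `HxH` or `xHx`, all inside `(H ∪ {x})³ ⊆ S³`; conversely
`x = x · 1` and `x⁻¹ = x · x⁻²` with `1, x⁻² ∈ L`, so `S ⊆ T`.
-/

open Pointwise Set

theorem Set.image_inter_image_self {α : Type*} {f : α → α} (hf : Function.Injective f)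
    {s : Set α} (hs : f '' (f '' s) = s) : f '' (s ∩ f '' s) = s ∩ f '' s := by
  rw [image_inter hf, hs, inter_comm]

namespace Subgroup

variable {G : Type*} [Group G] (H : Subgroup G)

theorem image_conj_eq_of_mem {h : G} (hh : h ∈ H) : (fun g => h * g * h⁻¹) '' H = H := by
  refine Subset.antisymm (image_subset_iff.2 fun g hg => ?_) fun g hg => ?_
  · exact H.mul_mem (H.mul_mem hh hg) (H.inv_mem hh)
  · exact ⟨h⁻¹ * g * h, H.mul_mem (H.mul_mem (H.inv_mem hh) hg) hh, by group⟩

theorem image_conj_image_conj_of_sq_mem {x : G} (hx2 : x ^ 2 ∈ H) :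
    (fun g => x⁻¹ * g * x) '' ((fun g => x⁻¹ * g * x) '' H) = H := by
  have hconj : (fun g => x⁻¹ * (x⁻¹ * g * x) * x) = fun g => (x ^ 2)⁻¹ * g * (x ^ 2)⁻¹⁻¹ := by
    funext g; simp only [pow_two, mul_inv_rev, inv_inv, mul_assoc]
  rw [image_image, hconj, image_conj_eq_of_mem H (H.inv_mem hx2)]

variable (x : G)

theorem mem_union_singleton_cube {g : G} (hg : g ∈ H) :
    g ∈ ((H : Set G) ∪ {x}) * ((H : Set G) ∪ {x}) * ((H : Set G) ∪ {x}) := by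
  simpa only [mul_one] using mul_mem_mul
    (mul_mem_mul (mem_union_left {x} hg) (mem_union_left {x} H.one_mem))
    (mem_union_left {x} H.one_mem)

theorem mul_mul_mem_union_singleton_cube {h h' : G} (hh : h ∈ H) (hh' : h' ∈ H) :
    h * x * h' ∈ ((H : Set G) ∪ {x}) * ((H : Set G) ∪ {x}) * ((H : Set G) ∪ {x}) :=
  mul_mem_mul (mul_mem_mul (mem_union_left _ hh) (mem_union_right _ rfl))
    (mem_union_left _ hh')

theorem mul_mul_mem_union_singleton_cube' {h : G} (hh : h ∈ H) :
    x * h * x ∈ ((H : Set G) ∪ {x}) * ((H : Set G) ∪ {x}) * ((H : Set G) ∪ {x}) :=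
  mul_mem_mul (mul_mem_mul (mem_union_right _ rfl) (mem_union_left _ hh))
    (mem_union_right _ rfl)

theorem union_cube_subset_union_singleton_cube {A : Set G} (hxH : A ⊆ {x} * H)
    (hHx : A ⊆ H * {x}) (hAA : A * A ⊆ H) :
    ((H : Set G) ∪ A) * ((H : Set G) ∪ A) * ((H : Set G) ∪ A) ⊆
      ((H : Set G) ∪ {x}) * ((H : Set G) ∪ {x}) * ((H : Set G) ∪ {x}) := by
  rintro _ ⟨_, ⟨t₁, ht₁, t₂, ht₂, rfl⟩, t₃, ht₃, rfl⟩
  show t₁ * t₂ * t₃ ∈ _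
  have left {a} (ha : a ∈ A) : ∃ h ∈ H, a = h * x := by
    obtain ⟨h, hh, _, rfl, rfl⟩ := hHx ha; exact ⟨h, hh, rfl⟩
  have right {a} (ha : a ∈ A) : ∃ h ∈ H, a = x * h := by
    obtain ⟨_, rfl, h, hh, rfl⟩ := hxH ha; exact ⟨h, hh, rfl⟩
  have pair {a b} (ha : a ∈ A) (hb : b ∈ A) : a * b ∈ H := hAA (mul_mem_mul ha hb)
  rcases ht₂ with h₂ | a₂
  · rcases ht₁ with h₁ | a₁ <;> rcases ht₃ with h₃ | a₃
    · exact mem_union_singleton_cube H x (H.mul_mem (H.mul_mem h₁ h₂) h₃)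
    · obtain ⟨h, hh, rfl⟩ := right a₃
      simpa only [mul_assoc] using
        mul_mul_mem_union_singleton_cube H x (H.mul_mem h₁ h₂) hh
    · obtain ⟨h, hh, rfl⟩ := left a₁
      simpa only [mul_assoc] using
        mul_mul_mem_union_singleton_cube H x hh (H.mul_mem h₂ h₃)
    · obtain ⟨h, hh, rfl⟩ := right a₁
      obtain ⟨h', hh', rfl⟩ := left a₃
      simpa only [mul_assoc] using
        mul_mul_mem_union_singleton_cube' H x (H.mul_mem (H.mul_mem hh h₂) hh')
  · rcases ht₁ with h₁ | a₁ <;> rcases ht₃ with h₃ | a₃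
    · obtain ⟨h, hh, rfl⟩ := right a₂
      simpa only [mul_assoc] using
        mul_mul_mem_union_singleton_cube H x h₁ (H.mul_mem hh h₃)
    · exact mem_union_singleton_cube H x (mul_assoc t₁ t₂ t₃ ▸ H.mul_mem h₁ (pair a₂ a₃))
    · exact mem_union_singleton_cube H x (H.mul_mem (pair a₁ a₂) h₃)
    · obtain ⟨h, hh, rfl⟩ := right a₃
      simpa only [mul_assoc] using
        mul_mul_mem_union_singleton_cube H x (pair a₁ a₂) hh

end Subgroup

section

variable {G : Type*} [Group G] {H : Subgroup G} {x : G}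

theorem singleton_mul_inter_conj_subset_mul_singleton :
    {x} * ((H : Set G) ∩ (fun g => x⁻¹ * g * x) '' H) ⊆ H * {x} := by
  rw [singleton_mul]
  rintro _ ⟨_, ⟨-, h, hh, rfl⟩, rfl⟩
  exact ⟨h, hh, x, rfl, by group⟩

theorem singleton_mul_inter_conj_mul_self_subset (hx2 : x ^ 2 ∈ H) :
    ({x} * ((H : Set G) ∩ (fun g => x⁻¹ * g * x) '' H)) *
      ({x} * ((H : Set G) ∩ (fun g => x⁻¹ * g * x) '' H)) ⊆ H := by
  rw [singleton_mul]
  rintro _ ⟨_, ⟨_, ⟨-, h, hh, rfl⟩, rfl⟩, _, ⟨l, ⟨hl, -⟩, rfl⟩, rfl⟩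
  show x * (x⁻¹ * h * x) * (x * l) ∈ H
  have hprod : x * (x⁻¹ * h * x) * (x * l) = h * x ^ 2 * l := by
    simp only [pow_two, mul_assoc, mul_inv_cancel_left]
  rw [hprod]
  exact H.mul_mem (H.mul_mem hh hx2) hl

theorem union_insert_inv_subset_union_singleton_mul_inter_conj (hx2 : x ^ 2 ∈ H) :
    (H : Set G) ∪ {x, x⁻¹} ⊆ H ∪ {x} * ((H : Set G) ∩ (fun g => x⁻¹ * g * x) '' H) := by
  have hxinv2 : (x ^ 2)⁻¹ ∈ H := H.inv_mem hx2
  refine union_subset_union_right _ (insert_subset_iff.2 ⟨?_, singleton_subset_iff.2 ?_⟩)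
  · exact ⟨x, rfl, 1, ⟨H.one_mem, 1, H.one_mem, by group⟩, mul_one x⟩
  · exact ⟨x, rfl, (x ^ 2)⁻¹, ⟨hxinv2, (x ^ 2)⁻¹, hxinv2, by group⟩, by group⟩

end

theorem stmt7_general {K : Type*} [Group K] (H : Subgroup K)
    (x : K) (hx2 : x ^ 2 ∈ H)
    (L : Set K) (hL : L = (H : Set K) ∩ (fun g => x⁻¹ * g * x) '' (H : Set K))
    (S T : Set K) (hS : S = (H : Set K) ∪ {x, x⁻¹}) (hT : T = (H : Set K) ∪ {x} * L) :
    (fun g => x⁻¹ * g * x) '' L = L ∧ T * T * T = S * S * S := by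
  subst hL hS hT
  have hconj_inj : Function.Injective fun g : K => x⁻¹ * g * x :=
    (mul_left_injective x).comp (mul_right_injective x⁻¹)
  refine ⟨image_inter_image_self hconj_inj (H.image_conj_image_conj_of_sq_mem hx2),
    Subset.antisymm ?_ ?_⟩
  · calc _ ⊆ ((H : Set K) ∪ {x}) * ((H : Set K) ∪ {x}) * ((H : Set K) ∪ {x}) :=
          H.union_cube_subset_union_singleton_cube x
            (mul_subset_mul_left inter_subset_left)
            singleton_mul_inter_conj_subset_mul_singleton
            (singleton_mul_inter_conj_mul_self_subset hx2)
      _ ⊆ _ := by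
          have hsub : (H : Set K) ∪ {x} ⊆ H ∪ {x, x⁻¹} :=
            union_subset_union_right _ (singleton_subset_iff.2 (mem_insert x _))
          gcongr
  · have hST := union_insert_inv_subset_union_singleton_mul_inter_conj hx2
    gcongr

theorem stmt7 {K : Type*} [Group K] [Finite K] (H : Subgroup K) (hH : H ≠ ⊤)
    (x : K) (hx : x ∉ H) (hx2 : x ^ 2 ∈ H)
    (L : Set K) (hL : L = (H : Set K) ∩ (fun g => x⁻¹ * g * x) '' (H : Set K))
    (S T : Set K) (hS : S = (H : Set K) ∪ {x, x⁻¹}) (hT : T = (H : Set K) ∪ {x} * L) :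
    (fun g => x⁻¹ * g * x) '' L = L ∧ T * T * T = S * S * S :=
  stmt7_general H x hx2 L hL S T hS hT
end

section
/- Let K be a finite group, H a non-normal subgroup, x ∈ K with ⟨H, x⟩ = K, x² ∈ H, and x of order greater than 2. Set S = H ∪ {x, x⁻¹}. If S³ ≠ K, then any symmetric subset T of K containing S with T³ = S³ satisfies T ⊆ H ∪ (Hx ∩ xH). -/
/-!
Write `B = H ∪ HxH`, a union of `(H, H)`-double cosets. Since `x² ∈ H`, every element of `S` lies in
`H` or in `Hx ∩ xH`, and multiplying out gives `S³ ⊆ B ∪ xHx`. If `xHx ⊆ B`, then `B` would be a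
subgroup containing `H` and `x`, hence `B = K ⊆ S³`; so some `xux` with `u ∈ H` lies outside `B`.

Let `t ∈ T ⊆ T³ = S³`. If `t ∉ B`, then for each `h ∈ H` the elements `ht` and `th` of `T³` are
outside `B`, hence in `xHx` like `t` itself; this forces `x⁻¹Hx ⊆ H` and `xHx⁻¹ ⊆ H`, so `x`
normalises `H` and `H` would be normal. If `t = h₁xh₂ ∈ HxH`, then `h₁(xux)` and `(xux)h₂` lie in
`T³` but outside `B`, hence in `xHx`, which gives `x⁻¹h₁x, xh₂x⁻¹ ∈ H`, i.e. `t ∈ Hx ∩ xH`.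
-/

open Pointwise DoubleCoset

section

variable {G : Type*} [Group G]

theorem Set.mem_mul_singleton_iff {s : Set G} {g a : G} : g ∈ s * {a} ↔ g * a⁻¹ ∈ s := by
  simp [Set.mul_singleton, Set.image_mul_right]

theorem Set.mem_singleton_mul_iff {s : Set G} {g a : G} : g ∈ {a} * s ↔ a⁻¹ * g ∈ s := by
  simp [Set.singleton_mul, Set.image_mul_left]

end

namespace Subgroup

variable {G : Type*} [Group G] {H : Subgroup G} {x a b c g h : G}

def unionDoubleCoset (H : Subgroup G) (x : G) : Set G :=
  (H : Set G) ∪ doubleCoset x H H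

theorem mem_unionDoubleCoset_of_mem (hg : g ∈ H) : g ∈ H.unionDoubleCoset x :=
  Or.inl hg

theorem mul_mul_mem_unionDoubleCoset (ha : a ∈ H) (hb : b ∈ H) :
    a * x * b ∈ H.unionDoubleCoset x :=
  Or.inr (mem_doubleCoset.mpr ⟨a, ha, b, hb, rfl⟩)

theorem mem_unionDoubleCoset_of_mem_mul_singleton (hg : g ∈ (H : Set G) * {x}) :
    g ∈ H.unionDoubleCoset x := by
  rw [Set.mem_mul_singleton_iff] at hg
  simpa using mul_mul_mem_unionDoubleCoset (x := x) hg H.one_mem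

theorem mul_mem_unionDoubleCoset_left (hh : h ∈ H) (hg : g ∈ H.unionDoubleCoset x) :
    h * g ∈ H.unionDoubleCoset x := by
  obtain hg | hg := hg
  · exact mem_unionDoubleCoset_of_mem (H.mul_mem hh hg)
  · obtain ⟨a, ha, b, hb, rfl⟩ := mem_doubleCoset.mp hg
    simpa only [mul_assoc] using mul_mul_mem_unionDoubleCoset (x := x) (H.mul_mem hh ha) hb

theorem mul_mem_unionDoubleCoset_right (hh : h ∈ H) (hg : g ∈ H.unionDoubleCoset x) :
    g * h ∈ H.unionDoubleCoset x := by
  obtain hg | hg := hg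
  · exact mem_unionDoubleCoset_of_mem (H.mul_mem hg hh)
  · obtain ⟨a, ha, b, hb, rfl⟩ := mem_doubleCoset.mp hg
    simpa only [mul_assoc] using mul_mul_mem_unionDoubleCoset (x := x) ha (H.mul_mem hb hh)

theorem mul_mem_unionDoubleCoset_left_iff (hh : h ∈ H) :
    h * g ∈ H.unionDoubleCoset x ↔ g ∈ H.unionDoubleCoset x :=
  ⟨fun hhg => by simpa using mul_mem_unionDoubleCoset_left (H.inv_mem hh) hhg,
    mul_mem_unionDoubleCoset_left hh⟩

theorem mul_mem_unionDoubleCoset_right_iff (hh : h ∈ H) :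
    g * h ∈ H.unionDoubleCoset x ↔ g ∈ H.unionDoubleCoset x :=
  ⟨fun hgh => by simpa using mul_mem_unionDoubleCoset_right (H.inv_mem hh) hgh,
    mul_mem_unionDoubleCoset_right hh⟩

theorem inv_mem_unionDoubleCoset (hx2 : x ^ 2 ∈ H) (hg : g ∈ H.unionDoubleCoset x) :
    g⁻¹ ∈ H.unionDoubleCoset x := by
  obtain hg | hg := hg
  · exact mem_unionDoubleCoset_of_mem (H.inv_mem hg)
  · obtain ⟨a, ha, b, hb, rfl⟩ := mem_doubleCoset.mp hg
    have key : (a * x * b)⁻¹ = (b⁻¹ * (x ^ 2)⁻¹) * x * a⁻¹ := by group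
    rw [key]
    exact mul_mul_mem_unionDoubleCoset (H.mul_mem (H.inv_mem hb) (H.inv_mem hx2)) (H.inv_mem ha)

/-- The point is that `HxH ⋅ HxH ⊆ H (xHx) H`. -/
theorem mul_mem_unionDoubleCoset (hxHx : ∀ u ∈ H, x * u * x ∈ H.unionDoubleCoset x)
    (ha : a ∈ H.unionDoubleCoset x) (hb : b ∈ H.unionDoubleCoset x) :
    a * b ∈ H.unionDoubleCoset x := by
  obtain ha | ha := ha
  · exact mul_mem_unionDoubleCoset_left ha hb
  obtain hb | hb := hb
  · exact mul_mem_unionDoubleCoset_right hb (Or.inr ha)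
  obtain ⟨a₁, ha₁, a₂, ha₂, rfl⟩ := mem_doubleCoset.mp ha
  obtain ⟨b₁, hb₁, b₂, hb₂, rfl⟩ := mem_doubleCoset.mp hb
  have key : a₁ * x * a₂ * (b₁ * x * b₂) = a₁ * (x * (a₂ * b₁) * x) * b₂ := by group
  rw [key]
  exact mul_mem_unionDoubleCoset_right hb₂
    (mul_mem_unionDoubleCoset_left ha₁ (hxHx _ (H.mul_mem ha₂ hb₁)))

theorem unionDoubleCoset_eq_univ (hgen : H ⊔ zpowers x = ⊤) (hx2 : x ^ 2 ∈ H)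
    (hxHx : ∀ u ∈ H, x * u * x ∈ H.unionDoubleCoset x) :
    H.unionDoubleCoset x = Set.univ := by
  let D : Subgroup G :=
    { carrier := H.unionDoubleCoset x
      one_mem' := mem_unionDoubleCoset_of_mem H.one_mem
      mul_mem' := mul_mem_unionDoubleCoset hxHx
      inv_mem' := inv_mem_unionDoubleCoset hx2 }
  have hxD : x ∈ H.unionDoubleCoset x := by
    simpa using mul_mul_mem_unionDoubleCoset (x := x) H.one_mem H.one_mem
  have hD : D = ⊤ := top_le_iff.mp <| hgen ▸ sup_le (fun _ => mem_unionDoubleCoset_of_mem)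
    (zpowers_le.mpr (show x ∈ D from hxD))
  exact Set.eq_univ_of_forall fun g => (hD ▸ mem_top g : g ∈ D)

theorem mul_mem_of_mem_mul_singleton_of_mem_singleton_mul (hx2 : x ^ 2 ∈ H)
    (ha : a ∈ (H : Set G) * {x}) (hb : b ∈ {x} * (H : Set G)) : a * b ∈ H := by
  rw [Set.mem_mul_singleton_iff] at ha
  rw [Set.mem_singleton_mul_iff] at hb
  have key : a * b = a * x⁻¹ * x ^ 2 * (x⁻¹ * b) := by group
  rw [key]
  exact H.mul_mem (H.mul_mem ha hx2) hb

theorem union_insert_subset_union_inter (hx2 : x ^ 2 ∈ H) :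
    (H : Set G) ∪ {x, x⁻¹} ⊆ (H : Set G) ∪ (((H : Set G) * {x}) ∩ ({x} * (H : Set G))) := by
  have hx2' : x⁻¹ ^ 2 ∈ H := by simpa using H.inv_mem hx2
  rintro s (hs | rfl | rfl)
  · exact Or.inl hs
  · refine Or.inr ⟨?_, ?_⟩ <;> simp
  · refine Or.inr ⟨?_, ?_⟩
    · rwa [Set.mem_mul_singleton_iff, SetLike.mem_coe, ← sq]
    · rwa [Set.mem_singleton_mul_iff, SetLike.mem_coe, ← sq]

theorem mul_mem_unionDoubleCoset_of_mem_union (hx2 : x ^ 2 ∈ H)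
    (ha : a ∈ (H : Set G) ∪ (((H : Set G) * {x}) ∩ ({x} * (H : Set G))))
    (hb : b ∈ (H : Set G) ∪ (((H : Set G) * {x}) ∩ ({x} * (H : Set G)))) :
    a * b ∈ H.unionDoubleCoset x := by
  rcases ha with ha | ha <;> rcases hb with hb | hb
  · exact mem_unionDoubleCoset_of_mem (H.mul_mem ha hb)
  · exact mul_mem_unionDoubleCoset_left ha (mem_unionDoubleCoset_of_mem_mul_singleton hb.1)
  · exact mul_mem_unionDoubleCoset_right hb (mem_unionDoubleCoset_of_mem_mul_singleton ha.1)
  · exact mem_unionDoubleCoset_of_mem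
      (mul_mem_of_mem_mul_singleton_of_mem_singleton_mul hx2 ha.1 hb.2)

theorem mul_mul_mem_unionDoubleCoset_or_of_mem_union (hx2 : x ^ 2 ∈ H)
    (ha : a ∈ (H : Set G) ∪ (((H : Set G) * {x}) ∩ ({x} * (H : Set G))))
    (hb : b ∈ (H : Set G) ∪ (((H : Set G) * {x}) ∩ ({x} * (H : Set G))))
    (hc : c ∈ (H : Set G) ∪ (((H : Set G) * {x}) ∩ ({x} * (H : Set G)))) :
    a * b * c ∈ H.unionDoubleCoset x ∨ x⁻¹ * (a * b * c) * x⁻¹ ∈ H := by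
  rcases ha with ha | ha
  · exact Or.inl (mul_assoc a b c ▸
      mul_mem_unionDoubleCoset_left ha (mul_mem_unionDoubleCoset_of_mem_union hx2 hb hc))
  rcases hc with hc | hc
  · exact Or.inl (mul_mem_unionDoubleCoset_right hc
      (mul_mem_unionDoubleCoset_of_mem_union hx2 (Or.inr ha) hb))
  rcases hb with hb | hb
  · right
    have key : x⁻¹ * (a * b * c) * x⁻¹ = x⁻¹ * a * b * (c * x⁻¹) := by group
    rw [key]
    exact H.mul_mem (H.mul_mem (Set.mem_singleton_mul_iff.mp ha.2) hb)
      (Set.mem_mul_singleton_iff.mp hc.1)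
  · exact Or.inl (mul_mem_unionDoubleCoset_left
      (mul_mem_of_mem_mul_singleton_of_mem_singleton_mul hx2 ha.1 hb.2)
      (mem_unionDoubleCoset_of_mem_mul_singleton hc.1))

theorem mem_unionDoubleCoset_or_of_mem_cube (hx2 : x ^ 2 ∈ H)
    (hg : g ∈ ((H : Set G) ∪ {x, x⁻¹}) * ((H : Set G) ∪ {x, x⁻¹}) * ((H : Set G) ∪ {x, x⁻¹})) :
    g ∈ H.unionDoubleCoset x ∨ x⁻¹ * g * x⁻¹ ∈ H := by
  obtain ⟨_, ⟨a, ha, b, hb, rfl⟩, c, hc, rfl⟩ := hg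
  have hS := union_insert_subset_union_inter hx2
  exact mul_mul_mem_unionDoubleCoset_or_of_mem_union hx2 (hS ha) (hS hb) (hS hc)

theorem unionDoubleCoset_subset_cube {S : Set G} (hHS : (H : Set G) ⊆ S) (hxS : x ∈ S) :
    H.unionDoubleCoset x ⊆ S * S * S := by
  rintro g (hg | hg)
  · simpa using Set.mul_mem_mul (Set.mul_mem_mul (hHS hg) (hHS H.one_mem)) (hHS H.one_mem)
  · obtain ⟨a, ha, b, hb, rfl⟩ := mem_doubleCoset.mp hg
    exact Set.mul_mem_mul (Set.mul_mem_mul (hHS ha) hxS) (hHS hb)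

theorem exists_mul_mul_notMem_unionDoubleCoset {S : Set G} (hgen : H ⊔ zpowers x = ⊤)
    (hx2 : x ^ 2 ∈ H) (hHS : (H : Set G) ⊆ S) (hxS : x ∈ S) (hS3 : S * S * S ≠ Set.univ) :
    ∃ u ∈ H, x * u * x ∉ H.unionDoubleCoset x := by
  by_contra! hxHx
  exact hS3 (Set.eq_univ_of_univ_subset
    (unionDoubleCoset_eq_univ hgen hx2 hxHx ▸ unionDoubleCoset_subset_cube hHS hxS))

theorem conj_mem_of_mul_mem_left (hg : x⁻¹ * g * x⁻¹ ∈ H)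
    (hcg : x⁻¹ * (c * g) * x⁻¹ ∈ H) : x⁻¹ * c * x ∈ H := by
  have key : x⁻¹ * c * x = x⁻¹ * (c * g) * x⁻¹ * (x⁻¹ * g * x⁻¹)⁻¹ := by group
  rw [key]
  exact H.mul_mem hcg (H.inv_mem hg)

theorem conj_mem_of_mul_mem_right (hg : x⁻¹ * g * x⁻¹ ∈ H)
    (hgc : x⁻¹ * (g * c) * x⁻¹ ∈ H) : x * c * x⁻¹ ∈ H := by
  have key : x * c * x⁻¹ = (x⁻¹ * g * x⁻¹)⁻¹ * (x⁻¹ * (g * c) * x⁻¹) := by group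
  rw [key]
  exact H.mul_mem (H.inv_mem hg) hgc

theorem normal_of_conj_mem (hgen : H ⊔ zpowers x = ⊤) (hconj : ∀ h ∈ H, x * h * x⁻¹ ∈ H)
    (hconj' : ∀ h ∈ H, x⁻¹ * h * x ∈ H) : H.Normal := by
  have hx : x ∈ normalizer (H : Set G) := mem_normalizer_iff.mpr fun h =>
    ⟨hconj h, fun hh => by simpa [mul_assoc] using hconj' _ hh⟩
  exact normalizer_eq_top_iff.mp <| top_le_iff.mp <|
    hgen ▸ sup_le le_normalizer (zpowers_le.mpr hx)

section cube

variable {T : Set G}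
  (hT : ∀ g ∈ T * T * T, g ∈ H.unionDoubleCoset x ∨ x⁻¹ * g * x⁻¹ ∈ H)
  (hHT : (H : Set G) ⊆ T)
include hT hHT

theorem mem_inter_of_mem_doubleCoset {t u : G} (hxT : x ∈ T) (hu : u ∈ H)
    (hxux : x * u * x ∉ H.unionDoubleCoset x) (ht : t ∈ T) (htd : t ∈ doubleCoset x H H) :
    t ∈ ((H : Set G) * {x}) ∩ ({x} * (H : Set G)) := by
  obtain ⟨a, ha, b, hb, rfl⟩ := mem_doubleCoset.mp htd
  have hxux' : x⁻¹ * (x * u * x) * x⁻¹ ∈ H := by simpa [mul_assoc] using hu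
  have hconj : x⁻¹ * a * x ∈ H := by
    have hmem : a * (x * u * x) ∈ T * T * T := by
      rw [show a * (x * u * x) = a * x * b * (b⁻¹ * u) * x by group]
      exact Set.mul_mem_mul (Set.mul_mem_mul ht (hHT (H.mul_mem (H.inv_mem hb) hu))) hxT
    refine conj_mem_of_mul_mem_left hxux' ((hT _ hmem).resolve_left ?_)
    rwa [mul_mem_unionDoubleCoset_left_iff ha]
  have hconj' : x * b * x⁻¹ ∈ H := by
    have hmem : x * u * x * b ∈ T * T * T := by
      rw [show x * u * x * b = x * (u * a⁻¹) * (a * x * b) by group]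
      exact Set.mul_mem_mul (Set.mul_mem_mul hxT (hHT (H.mul_mem hu (H.inv_mem ha)))) ht
    refine conj_mem_of_mul_mem_right hxux' ((hT _ hmem).resolve_left ?_)
    rwa [mul_mem_unionDoubleCoset_right_iff hb]
  constructor
  · rw [Set.mem_mul_singleton_iff, show a * x * b * x⁻¹ = a * (x * b * x⁻¹) by group]
    exact H.mul_mem ha hconj'
  · rw [Set.mem_singleton_mul_iff, show x⁻¹ * (a * x * b) = x⁻¹ * a * x * b by group]
    exact H.mul_mem hconj hb

theorem normal_of_notMem_unionDoubleCoset {t : G} (hgen : H ⊔ zpowers x = ⊤) (ht : t ∈ T)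
    (htB : t ∉ H.unionDoubleCoset x) : H.Normal := by
  have h1T : (1 : G) ∈ T := hHT H.one_mem
  have htx : x⁻¹ * t * x⁻¹ ∈ H :=
    (hT t (by simpa using Set.mul_mem_mul (Set.mul_mem_mul ht h1T) h1T)).resolve_left htB
  refine normal_of_conj_mem hgen (fun h hh => ?_) (fun h hh => ?_)
  · have hmem : t * h ∈ T * T * T := by
      simpa using Set.mul_mem_mul (Set.mul_mem_mul ht h1T) (hHT hh)
    refine conj_mem_of_mul_mem_right htx ((hT _ hmem).resolve_left ?_)
    rwa [mul_mem_unionDoubleCoset_right_iff hh]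
  · have hmem : h * t ∈ T * T * T := by
      simpa using Set.mul_mem_mul (Set.mul_mem_mul (hHT hh) ht) h1T
    refine conj_mem_of_mul_mem_left htx ((hT _ hmem).resolve_left ?_)
    rwa [mul_mem_unionDoubleCoset_left_iff hh]

end cube

end Subgroup

theorem stmt9_general {K : Type*} [Group K] (H : Subgroup K) (hH : ¬ H.Normal)
    (x : K) (hgen : H ⊔ Subgroup.zpowers x = ⊤) (hx2 : x ^ 2 ∈ H)
    (S : Set K) (hS : S = (H : Set K) ∪ {x, x⁻¹}) (hS3 : S * S * S ≠ Set.univ)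
    (T : Set K) (hST : S ⊆ T) (hT3 : T * T * T = S * S * S) :
    T ⊆ (H : Set K) ∪ (((H : Set K) * {x}) ∩ ({x} * (H : Set K))) := by
  subst hS
  have hHT : (H : Set K) ⊆ T := Set.subset_union_left.trans hST
  have hxS : x ∈ (H : Set K) ∪ {x, x⁻¹} := Or.inr (Set.mem_insert x _)
  obtain ⟨u, hu, hxux⟩ :=
    Subgroup.exists_mul_mul_notMem_unionDoubleCoset hgen hx2 Set.subset_union_left hxS hS3
  have hT : ∀ g ∈ T * T * T, g ∈ H.unionDoubleCoset x ∨ x⁻¹ * g * x⁻¹ ∈ H :=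
    hT3 ▸ fun g => Subgroup.mem_unionDoubleCoset_or_of_mem_cube hx2
  intro t ht
  have htB : t ∈ H.unionDoubleCoset x := by
    by_contra htB
    exact hH (Subgroup.normal_of_notMem_unionDoubleCoset hT hHT hgen ht htB)
  rcases htB with htH | htd
  · exact Or.inl htH
  · exact Or.inr (Subgroup.mem_inter_of_mem_doubleCoset hT hHT (hST hxS) hu hxux ht htd)

theorem stmt9 {K : Type*} [Group K] [Finite K] (H : Subgroup K) (hH : ¬ H.Normal)
    (x : K) (horder : 2 < orderOf x) (hgen : H ⊔ Subgroup.zpowers x = ⊤) (hx2 : x ^ 2 ∈ H)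
    (S : Set K) (hS : S = (H : Set K) ∪ {x, x⁻¹}) (hS3 : S * S * S ≠ Set.univ)
    (T : Set K) (hTsym : T⁻¹ = T) (hST : S ⊆ T) (hT3 : T * T * T = S * S * S) :
    T ⊆ (H : Set K) ∪ (((H : Set K) * {x}) ∩ ({x} * (H : Set K))) :=
  stmt9_general H hH x hgen hx2 S hS hS3 T hST hT3
end

section
/- Let H be a proper subgroup of a finite group K and x ∈ K with ⟨H, x⟩ = K, x² ∈ H, and |HxH| = 2|H|. Then L = H ∩ x⁻¹Hx is a normal subgroup of K. -/
/-! `HxH` is the disjoint union of the right cosets `Hxh` (`h ∈ H`), and `Hxa = Hxb` exactly when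
`ab⁻¹ ∈ x⁻¹Hx`. So `|HxH| < 3|H|` forces `L = H ∩ x⁻¹Hx` to have index at most 2 in `H`, and `H`
normalizes `L`. Since `x² ∈ H`, conjugation by `x` swaps `H` and `x⁻¹Hx`, so `x` normalizes `L`
as well, and `H` and `x` generate `K`. -/

open Pointwise

namespace Subgroup

variable {G : Type*} [Group G]

theorem mem_map_conj_inv_iff (H : Subgroup G) (x g : G) :
    g ∈ H.map (MulAut.conj x⁻¹).toMonoidHom ↔ x * g * x⁻¹ ∈ H := by
  rw [mem_map_equiv]
  simp

theorem card_mul_ncard_eq_ncard_mul (H : Subgroup G) {T : Set G}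
    (hT : ∀ a ∈ T, ∀ b ∈ T, b * a⁻¹ ∈ H → a = b) :
    Nat.card H * T.ncard = ((H : Set G) * T).ncard := by
  have hinj : Set.InjOn (fun p : G × G => p.1 * p.2) ((H : Set G) ×ˢ T) := by
    rintro ⟨h, t⟩ ⟨hh, ht⟩ ⟨h', t'⟩ ⟨hh', ht'⟩ (heq : h * t = h' * t')
    have htt' : t = t' := hT t ht t' ht' <| by
      rw [show t' * t⁻¹ = h'⁻¹ * h by rw [eq_inv_mul_iff_mul_eq, ← mul_assoc, ← heq]; group]
      exact mul_mem (inv_mem hh') hh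
    subst htt'
    simp_all
  rw [← Set.image_mul_prod, hinj.ncard_image, Set.ncard_prod, ← Nat.card_coe_set_eq]
  rfl

theorem card_mul_ncard_le_ncard_doubleCoset [Finite G] (H : Subgroup G) (x : G) {U : Set G}
    (hUH : U ⊆ H) (hU : ∀ u ∈ U, ∀ v ∈ U, v * u⁻¹ ∈ H.map (MulAut.conj x⁻¹).toMonoidHom → u = v) :
    Nat.card H * U.ncard ≤ ((H : Set G) * {x} * H).ncard := by
  have hT : ∀ s ∈ x • U, ∀ t ∈ x • U, t * s⁻¹ ∈ H → s = t := by
    rintro _ ⟨u, hu, rfl⟩ _ ⟨v, hv, rfl⟩ huv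
    rw [hU u hu v hv <| (mem_map_conj_inv_iff H x _).mpr (by simpa [mul_assoc] using huv)]
  have hsub : (H : Set G) * (x • U) ⊆ (H : Set G) * {x} * H := by
    rintro _ ⟨h, hh, _, ⟨u, hu, rfl⟩, rfl⟩
    show h * (x * u) ∈ _
    rw [← mul_assoc]
    exact Set.mul_mem_mul (Set.mul_mem_mul hh rfl) (hUH hu)
  rw [← Set.ncard_smul_set x U, card_mul_ncard_eq_ncard_mul H hT]
  exact Set.ncard_le_ncard hsub (Set.toFinite _)

theorem mul_inv_mem_of_ncard_doubleCoset_lt [Finite G] {H : Subgroup G} {x : G}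
    (hcard : ((H : Set G) * {x} * H).ncard < 3 * Nat.card H) :
    ∀ a ∈ H, ∀ b ∈ H, a ∉ H.map (MulAut.conj x⁻¹).toMonoidHom →
      b ∉ H.map (MulAut.conj x⁻¹).toMonoidHom → a * b⁻¹ ∈ H.map (MulAut.conj x⁻¹).toMonoidHom := by
  intro a ha b hb haM hbM
  by_contra habM
  have hbaM : b * a⁻¹ ∉ H.map (MulAut.conj x⁻¹).toMonoidHom := by
    simpa using (inv_mem_iff (x := a * b⁻¹)).not.mpr habM
  have hU : ∀ u ∈ ({1, a, b} : Set G), ∀ v ∈ ({1, a, b} : Set G),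
      v * u⁻¹ ∈ H.map (MulAut.conj x⁻¹).toMonoidHom → u = v := by
    rintro u hu v hv huv
    simp only [Set.mem_insert_iff, Set.mem_singleton_iff] at hu hv
    rcases hu with rfl | rfl | rfl <;> rcases hv with rfl | rfl | rfl <;>
      first
      | rfl
      | contradiction
      | (simp only [mul_one, one_mul, inv_one, inv_mem_iff] at huv; contradiction)
  have hU3 : ({1, a, b} : Set G).ncard = 3 := by
    refine Set.ncard_eq_three.mpr ⟨1, a, b, ?_, ?_, ?_, rfl⟩
    · exact fun h => haM (h ▸ one_mem _)
    · exact fun h => hbM (h ▸ one_mem _)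
    · exact fun h => habM (by simp [h])
  have := card_mul_ncard_le_ncard_doubleCoset H x (by simp [Set.insert_subset_iff, ha, hb]) hU
  rw [hU3] at this
  omega

theorem le_normalizer_inf_of_mul_inv_mem {H M : Subgroup G}
    (hHM : ∀ a ∈ H, ∀ b ∈ H, a ∉ M → b ∉ M → a * b⁻¹ ∈ M) :
    H ≤ normalizer (H ⊓ M : Subgroup G) := by
  rw [le_normalizer_iff]
  intro h hh l hl
  obtain ⟨hlH, hlM⟩ := mem_inf.mp hl
  refine mem_inf.mpr ⟨mul_mem (mul_mem hh hlH) (inv_mem hh), ?_⟩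
  by_cases hhM : h ∈ M
  · exact mul_mem (mul_mem hhM hlM) (inv_mem hhM)
  · exact hHM _ (mul_mem hh hlH) h hh (fun h' => hhM (by simpa using mul_mem h' (inv_mem hlM)))
      hhM

theorem mem_normalizer_inf_map_conj_inv {H : Subgroup G} {x : G} (hx2 : x ^ 2 ∈ H) :
    x ∈ normalizer (H ⊓ H.map (MulAut.conj x⁻¹).toMonoidHom : Subgroup G) := by
  have hconj : ∀ g, x * (x * g * x⁻¹) * x⁻¹ ∈ H ↔ g ∈ H := fun g => by
    rw [show x * (x * g * x⁻¹) * x⁻¹ = x ^ 2 * g * (x ^ 2)⁻¹ by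
      simp only [sq, mul_inv_rev, mul_assoc]]
    exact ((mem_normalizer_iff.mp (le_normalizer hx2)) g).symm
  rw [mem_normalizer_iff]
  intro g
  simp only [mem_inf, mem_map_conj_inv_iff, hconj]
  exact and_comm

end Subgroup

theorem stmt11_general {K : Type*} [Group K] [Finite K] (H : Subgroup K)
    (x : K) (hgen : H ⊔ Subgroup.zpowers x = ⊤) (hx2 : x ^ 2 ∈ H)
    (hcard : ((H : Set K) * {x} * (H : Set K)).ncard = 2 * Nat.card H) :
    (H ⊓ Subgroup.map (MulAut.conj x⁻¹).toMonoidHom H).Normal := by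
  have hlt : ((H : Set K) * {x} * H).ncard < 3 * Nat.card H := by
    have : 0 < Nat.card H := Nat.card_pos
    omega
  set L := H ⊓ H.map (MulAut.conj x⁻¹).toMonoidHom
  have hH_le : H ≤ Subgroup.normalizer (L : Set K) :=
    Subgroup.le_normalizer_inf_of_mul_inv_mem (Subgroup.mul_inv_mem_of_ncard_doubleCoset_lt hlt)
  have hx_le : Subgroup.zpowers x ≤ Subgroup.normalizer (L : Set K) :=
    Subgroup.zpowers_le.mpr (Subgroup.mem_normalizer_inf_map_conj_inv hx2)
  rw [← Subgroup.normalizer_eq_top_iff, eq_top_iff, ← hgen]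
  exact sup_le hH_le hx_le

theorem stmt11 {K : Type*} [Group K] [Finite K] (H : Subgroup K) (hH : H ≠ ⊤)
    (x : K) (hgen : H ⊔ Subgroup.zpowers x = ⊤) (hx2 : x ^ 2 ∈ H)
    (hcard : ((H : Set K) * {x} * (H : Set K)).ncard = 2 * Nat.card H) :
    (H ⊓ Subgroup.map (MulAut.conj x⁻¹).toMonoidHom H).Normal :=
  stmt11_general H x hgen hx2 hcard
end

section
/- For every real k ≥ 1 and every real l ≥ 2, the function f_l(k) = log(l·k·(k+1)) / log(l·(k+1)) is strictly increasing in k. -/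
/-!
Writing `a = log k`, `L = log l` and `c = log (1 + 1/k)`, the quotient equals
`1 + a / (L + a + c)`. On `k ≥ 1` the term `a ≥ 0` increases strictly while `c ≥ 0` decreases,
so `a / (L + a + c)` increases strictly as soon as `L > 0`.
-/

open Real Set

lemma div_add_add_lt_div_add_add {a a' c c' L : ℝ} (ha : 0 ≤ a) (haa' : a < a') (hc' : 0 ≤ c')
    (hcc' : c' ≤ c) (hL : 0 < L) : a / (L + a + c) < a' / (L + a' + c') := by
  rw [div_lt_div_iff₀ (by linarith) (by linarith)]
  nlinarith [mul_le_mul haa'.le hcc' hc' (by linarith)]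

lemma log_mul_add_one {l k : ℝ} (hl : 0 < l) (hk : 0 < k) :
    log (l * (k + 1)) = log l + log k + log (1 + k⁻¹) := by
  rw [← log_mul hl.ne' hk.ne', ← log_mul (by positivity) (by positivity)]
  congr 1
  field_simp

lemma strictMonoOn_log_div_log_mul_add_one {l : ℝ} (hl : 1 < l) :
    StrictMonoOn (fun k => log k / log (l * (k + 1))) (Ici 1) := by
  intro x (hx : 1 ≤ x) y (hy : 1 ≤ y) hxy
  have hx0 : 0 < x := by linarith
  have hy0 : 0 < y := by linarith
  simp only [log_mul_add_one (by linarith : 0 < l) hx0, log_mul_add_one (by linarith : 0 < l) hy0]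
  refine div_add_add_lt_div_add_add (log_nonneg hx) (log_lt_log hx0 hxy) ?_ ?_ (log_pos hl)
  · exact log_nonneg (by simp [inv_nonneg, hy0.le])
  · gcongr

lemma log_mul_mul_add_one_div {l k : ℝ} (hl : 0 < l) (hk : 0 < k) (h : log (l * (k + 1)) ≠ 0) :
    log (l * k * (k + 1)) / log (l * (k + 1)) = 1 + log k / log (l * (k + 1)) := by
  rw [mul_right_comm, log_mul (by positivity) hk.ne', add_div, div_self h]

theorem stmt12 : ∀ l : ℝ, 2 ≤ l → StrictMonoOn
    (fun k : ℝ => Real.logb 2 (l * k * (k + 1)) / Real.logb 2 (l * (k + 1)))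
    (Set.Ici 1) := by
  intro l hl
  have hl0 : 0 < l := by linarith
  have hquot : ∀ k ∈ Ici (1 : ℝ), logb 2 (l * k * (k + 1)) / logb 2 (l * (k + 1)) =
      1 + log k / log (l * (k + 1)) := fun k (hk : 1 ≤ k) => by
    rw [logb, logb, div_div_div_cancel_right₀ (log_pos one_lt_two).ne']
    exact log_mul_mul_add_one_div hl0 (by linarith) (log_pos (by nlinarith)).ne'
  intro x hx y hy hxy
  simp only [hquot x hx, hquot y hy, add_lt_add_iff_left]
  exact strictMonoOn_log_div_log_mul_add_one (by linarith) hx hy hxy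
end

section
/- For every real k ≥ 1 and every real l ≥ 2, the function g_l(k) = log(l·k·(2k+1)) / log(l·(k+1)) is strictly increasing in k. -/
/-!
Write the quotient as `log A / log B` with `A = l k (2k+1)` and `B = l (k+1)`. By the quotient
rule it increases where `log A · B'/B < A'/A · log B`, i.e. where
`log A / (k+1) < (4k+1)/(k(2k+1)) · log B`. Since `l ≥ 2` gives `A ≤ B²`, we have
`log A ≤ 2 log B` with `log B > 0`, and `2/(k+1) < (4k+1)/(k(2k+1))` is just `4k²+2k < 4k²+5k+1`.
-/

open Real Set

theorem strictMonoOn_div_of_hasDerivAt {D : Set ℝ} (hD : Convex ℝ D) {f g f' g' : ℝ → ℝ}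
    (hf : ∀ x ∈ D, HasDerivAt f (f' x) x) (hg : ∀ x ∈ D, HasDerivAt g (g' x) x)
    (hg₀ : ∀ x ∈ D, g x ≠ 0) (hfg : ∀ x ∈ D, f x * g' x < f' x * g x) :
    StrictMonoOn (fun x => f x / g x) D := by
  have hquot : ∀ x ∈ D, HasDerivAt (fun x => f x / g x)
      ((f' x * g x - f x * g' x) / g x ^ 2) x := fun x hx => (hf x hx).div (hg x hx) (hg₀ x hx)
  refine strictMonoOn_of_hasDerivWithinAt_pos hD
    (fun x hx => (hquot x hx).continuousAt.continuousWithinAt)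
    (fun x hx => (hquot x (interior_subset hx)).hasDerivWithinAt) fun x hx => ?_
  have hx := interior_subset hx
  have hgx := hg₀ x hx
  exact div_pos (sub_pos.2 (hfg x hx)) (by positivity)

theorem logb_div_logb {b : ℝ} (hb : log b ≠ 0) (x y : ℝ) : logb b x / logb b y = log x / log y :=
  div_div_div_cancel_right₀ hb _ _

section

variable {l k : ℝ}

theorem one_lt_mul_add_one (hl : 2 ≤ l) (hk : 0 ≤ k) : 1 < l * (k + 1) := by
  nlinarith

theorem log_mul_mul_two_mul_add_one_le (hl : 2 ≤ l) (hk : 0 < k) :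
    log (l * k * (2 * k + 1)) ≤ 2 * log (l * (k + 1)) := by
  rw [← log_rpow (by linarith [one_lt_mul_add_one hl hk.le]), rpow_two]
  refine log_le_log (by positivity) ?_
  have : k * (2 * k + 1) ≤ 2 * (k + 1) ^ 2 := by nlinarith
  nlinarith [mul_le_mul_of_nonneg_left this (by linarith : (0 : ℝ) ≤ l)]

theorem log_mul_mul_two_mul_add_one_div_lt (hl : 2 ≤ l) (hk : 0 < k) :
    log (l * k * (2 * k + 1)) * (1 / (k + 1)) <
      (4 * k + 1) / (k * (2 * k + 1)) * log (l * (k + 1)) := by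
  have hB : 0 < log (l * (k + 1)) := log_pos (one_lt_mul_add_one hl hk.le)
  have hrate : 2 / (k + 1) < (4 * k + 1) / (k * (2 * k + 1)) := by
    rw [div_lt_div_iff₀ (by positivity) (by positivity)]
    nlinarith
  calc log (l * k * (2 * k + 1)) * (1 / (k + 1))
      ≤ 2 * log (l * (k + 1)) * (1 / (k + 1)) :=
        mul_le_mul_of_nonneg_right (log_mul_mul_two_mul_add_one_le hl hk) (by positivity)
    _ = 2 / (k + 1) * log (l * (k + 1)) := by ring
    _ < (4 * k + 1) / (k * (2 * k + 1)) * log (l * (k + 1)) := mul_lt_mul_of_pos_right hrate hB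

theorem hasDerivAt_log_mul_mul_two_mul_add_one (hl : l ≠ 0) (hk : 0 < k) :
    HasDerivAt (fun k => log (l * k * (2 * k + 1))) ((4 * k + 1) / (k * (2 * k + 1))) k := by
  have hA : HasDerivAt (fun k => l * k * (2 * k + 1)) (l * (4 * k + 1)) k := by
    refine (((hasDerivAt_id' k).const_mul l).fun_mul
      (((hasDerivAt_id' k).const_mul 2).add_const 1)).congr_deriv ?_
    ring
  refine (hA.log (by positivity)).congr_deriv ?_
  field_simp

theorem hasDerivAt_log_mul_add_one (hl : l ≠ 0) (hk : k + 1 ≠ 0) :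
    HasDerivAt (fun k => log (l * (k + 1))) (1 / (k + 1)) k := by
  refine ((((hasDerivAt_id' k).add_const 1).const_mul l).log (mul_ne_zero hl hk)).congr_deriv ?_
  field_simp

end

theorem strictMonoOn_log_div_log {l : ℝ} (hl : 2 ≤ l) :
    StrictMonoOn (fun k => log (l * k * (2 * k + 1)) / log (l * (k + 1))) (Ioi 0) := by
  have hl₀ : l ≠ 0 := by positivity
  exact strictMonoOn_div_of_hasDerivAt (convex_Ioi 0)
    (fun k hk => hasDerivAt_log_mul_mul_two_mul_add_one hl₀ hk)
    (fun k (hk : 0 < k) => hasDerivAt_log_mul_add_one hl₀ (by positivity))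
    (fun k hk => (log_pos (one_lt_mul_add_one hl hk.le)).ne')
    (fun k hk => log_mul_mul_two_mul_add_one_div_lt hl hk)

theorem stmt13 : ∀ l : ℝ, 2 ≤ l → StrictMonoOn
    (fun k : ℝ => Real.logb 2 (l * k * (2 * k + 1)) / Real.logb 2 (l * (k + 1)))
    (Set.Ici 1) := by
  intro l hl
  simp_rw [logb_div_logb (log_pos one_lt_two).ne']
  exact (strictMonoOn_log_div_log hl).mono fun k (hk : 1 ≤ k) => show 0 < k by linarith
end

section
/- Let H be a proper subgroup of a finite group K and L = x⁻¹Hx ∩ H for some x ∈ K. If L is the unique subgroup of H of index [H : L], then x⁻¹Lx = L. -/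
/-! Since `L ≤ x⁻¹Hx`, conjugation by `x` carries `L` into `H`; being injective it preserves
the order of `L`, hence its index in `H`, so uniqueness forces `xLx⁻¹ = L`, i.e. `x⁻¹Lx = L`. -/

namespace Subgroup

variable {G : Type*} [Group G]

theorem card_mul_relIndex {M H : Subgroup G} (hM : M ≤ H) :
    Nat.card M * M.relIndex H = Nat.card H := by
  simpa using relIndex_mul_relIndex ⊥ M H bot_le hM

theorem relIndex_eq_of_card_eq {H M N : Subgroup G} [Finite M] (hM : M ≤ H) (hN : N ≤ H)
    (hcard : Nat.card M = Nat.card N) : M.relIndex H = N.relIndex H :=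
  Nat.eq_of_mul_eq_mul_left Nat.card_pos <| by
    rw [card_mul_relIndex hM, hcard, card_mul_relIndex hN]

theorem map_eq_self_of_unique_relIndex [Finite G] {H L : Subgroup G} (hLH : L ≤ H)
    (huniq : ∀ M ≤ H, M.relIndex H = L.relIndex H → M = L) {f : G →* G}
    (hf : Function.Injective f) (hfL : L.map f ≤ H) : L.map f = L :=
  huniq _ hfL (relIndex_eq_of_card_eq hfL hLH (card_map_of_injective hf))

end Subgroup

theorem stmt14_general {K : Type*} [Group K] [Finite K] (H : Subgroup K) (x : K)
    (L : Subgroup K) (hL : L = Subgroup.map (MulAut.conj x⁻¹).toMonoidHom H ⊓ H)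
    (huniq : ∀ M : Subgroup K, M ≤ H →
      (M.subgroupOf H).index = (L.subgroupOf H).index → M = L) :
    Subgroup.map (MulAut.conj x⁻¹).toMonoidHom L = L := by
  rw [map_inv, MulAut.inv_def, ← Subgroup.comap_equiv_eq_map_symm'] at hL ⊢
  have hLH : L ≤ H := hL ▸ inf_le_right
  have hconj : L.map (MulAut.conj x).toMonoidHom ≤ H :=
    Subgroup.map_le_iff_le_comap.2 (hL ▸ inf_le_left)
  have hfix := Subgroup.map_eq_self_of_unique_relIndex hLH huniq (MulAut.conj x).injective hconj
  conv_lhs => rw [← hfix]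
  exact Subgroup.comap_map_eq_self_of_injective (MulAut.conj x).injective L

theorem stmt14 {K : Type*} [Group K] [Finite K] (H : Subgroup K) (hH : H ≠ ⊤) (x : K)
    (L : Subgroup K) (hL : L = Subgroup.map (MulAut.conj x⁻¹).toMonoidHom H ⊓ H)
    (huniq : ∀ M : Subgroup K, M ≤ H →
      (M.subgroupOf H).index = (L.subgroupOf H).index → M = L) :
    Subgroup.map (MulAut.conj x⁻¹).toMonoidHom L = L :=
  stmt14_general H x L hL huniq
end

section
/- Let p ≥ 5 be prime, let U be the group of upper triangular matrices in SL(2,p), let H ≤ U contain the subgroup N of upper unitriangular matrices, and let x ∈ SL(2,p) \ U. Then [H : H ∩ x⁻¹Hx] = p, and hence |HxH| = p|H|. -/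
/-!
For upper triangular `A`, a direct computation gives
`(x A x⁻¹)₁₀ = x₁₀ (x₁₁ (A₀₀ - A₁₁) - x₁₀ A₀₁)`. Hence the unipotent group `N` meets `x⁻¹ H x`
trivially, while every `h ∈ H` becomes an element of `H ∩ x⁻¹ H x` after right multiplication by a
suitable element of `N`: an upper triangular matrix already lies in `H` once its diagonal is that
of an element of `H`, since `N ≤ H`. So `N` is a complement of `H ∩ x⁻¹ H x` in `H`, and the index
is `|N| = p`. Finally `|H x H| = |H| [H : H ∩ x⁻¹ H x]` in any group: `H x⁻¹ H = (H x)⁻¹`, and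
the image of `H x⁻¹` in `G ⧸ H` is the `H`-orbit of `x⁻¹ H`, whose stabiliser is `H ∩ x⁻¹ H x`.
-/

open Pointwise
open scoped MatrixGroups

namespace Subgroup

variable {G : Type*} [Group G]

theorem mem_map_conj_iff {H : Subgroup G} {g a : G} :
    a ∈ H.map (MulAut.conj g).toMonoidHom ↔ g⁻¹ * a * g ∈ H := by
  rw [mem_map_equiv]
  simp [MulAut.conj_symm_apply]

theorem index_subgroupOf_eq_card_of_disjoint {H K N : Subgroup G} (hdisj : Disjoint K N)
    (hmul : (K : Set G) * N = H) : (K.subgroupOf H).index = Nat.card N := by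
  have hKH : K ≤ H := fun k hk => by
    simpa [hmul] using Set.mul_mem_mul hk N.one_mem
  have hNH : N ≤ H := fun n hn => by
    simpa [hmul] using Set.mul_mem_mul K.one_mem hn
  have hcompl : IsComplement' (K.subgroupOf H) (N.subgroupOf H) := by
    refine isComplement'_of_disjoint_and_mul_eq_univ
      (disjoint_def.mpr fun hk hn => Subtype.ext (disjoint_def.mp hdisj hk hn))
      (Set.eq_univ_of_forall fun ⟨h, hh⟩ => ?_)
    obtain ⟨k, hk, n, hn, rfl⟩ : h ∈ (K : Set G) * N := hmul ▸ hh
    exact ⟨⟨k, hKH hk⟩, hk, ⟨n, hNH hn⟩, hn, rfl⟩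
  rw [hcompl.symm.index_eq_card, Nat.card_congr (subgroupOfEquivOfLe hNH).toEquiv]

theorem ncard_mul_singleton_mul (H : Subgroup G) (x : G) :
    ((H : Set G) * {x} * H).ncard =
      Nat.card H * ((H ⊓ H.map (MulAut.conj x⁻¹).toMonoidHom).subgroupOf H).index := by
  have hinv : ((H : Set G) * {x} * H)⁻¹ = (H : Set G) * {x⁻¹} * H := by
    simp only [mul_inv_rev, inv_coe_set, Set.inv_singleton, mul_assoc]
  have horbit : ((H : Set G) * {x⁻¹}).image ((↑) : G → G ⧸ H) =
      MulAction.orbit H ((x⁻¹ : G) : G ⧸ H) := by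
    ext q
    constructor
    · rintro ⟨_, ⟨h, hh, _, rfl, rfl⟩, rfl⟩
      exact ⟨⟨h, hh⟩, rfl⟩
    · rintro ⟨⟨h, hh⟩, rfl⟩
      exact ⟨h * x⁻¹, Set.mul_mem_mul hh rfl, rfl⟩
  have hstab : MulAction.stabilizer H ((x⁻¹ : G) : G ⧸ H) =
      (H ⊓ H.map (MulAut.conj x⁻¹).toMonoidHom).subgroupOf H := by
    ext ⟨h, hh⟩
    change ((h * x⁻¹ : G) : G ⧸ H) = _ ↔ _
    rw [QuotientGroup.eq, mem_subgroupOf, mem_inf, mem_map_conj_iff, ← H.inv_mem_iff]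
    simp [hh, mul_assoc]
  rw [← Set.ncard_inv, hinv, ← Nat.card_coe_set_eq, card_mul_eq_card_subgroup_mul_card_quotient,
    horbit, Nat.card_coe_set_eq, ← MulAction.index_stabilizer, hstab]

end Subgroup

namespace Matrix.SpecialLinearGroup

section CommRing

variable {R : Type*} [CommRing R]

def upperUnipotent : Multiplicative R →* SL(2, R) where
  toFun t := transvection zero_ne_one t.toAdd
  map_one' := transvection_coeff_zero _
  map_mul' _ _ := transvection_add _ _ _

@[simp] theorem coe_upperUnipotent (t : Multiplicative R) :
    (upperUnipotent t : Matrix (Fin 2) (Fin 2) R) = !![1, t.toAdd; 0, 1] := by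
  ext i j; fin_cases i <;> fin_cases j <;> simp [upperUnipotent, transvection_coe]

theorem upperUnipotent_injective : Function.Injective (upperUnipotent (R := R)) := fun s t h => by
  simpa using congr_arg (fun A : SL(2, R) => A 0 1) h

theorem det_fin_two_eq_one (A : SL(2, R)) : A 0 0 * A 1 1 - A 0 1 * A 1 0 = 1 := by
  rw [← det_fin_two, det_coe]

theorem mem_range_upperUnipotent {A : SL(2, R)} :
    A ∈ (upperUnipotent (R := R)).range ↔ A 0 0 = 1 ∧ A 1 0 = 0 := by
  constructor
  · rintro ⟨t, rfl⟩
    simp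
  · rintro ⟨h00, h10⟩
    refine ⟨Multiplicative.ofAdd (A 0 1), ?_⟩
    have h11 : A 1 1 = 1 := by simpa [h00, h10] using A.det_fin_two_eq_one
    ext i j; fin_cases i <;> fin_cases j <;> simp [h00, h10, h11]

theorem conj_apply_of_apply_one_zero_eq_zero (x : SL(2, R)) {A : SL(2, R)} (hA : A 1 0 = 0) :
    (x * A * x⁻¹) 1 0 = x 1 0 * (x 1 1 * (A 0 0 - A 1 1) - x 1 0 * A 0 1) ∧
    (x * A * x⁻¹) 0 0 = A 1 1 + x 0 0 * (x 1 1 * (A 0 0 - A 1 1) - x 1 0 * A 0 1) := by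
  have hx := x.det_fin_two_eq_one
  simp only [coe_mul, coe_inv, adjugate_fin_two, mul_apply, Fin.sum_univ_two, of_apply, cons_val',
    cons_val_zero, cons_val_one, cons_val_fin_one, hA, mul_zero, add_zero, mul_neg]
  exact ⟨by ring, by linear_combination A 1 1 * hx⟩

variable {H : Subgroup SL(2, R)}

theorem mem_of_apply_zero_zero_eq (hN : (upperUnipotent (R := R)).range ≤ H) {A B : SL(2, R)}
    (hA : A ∈ H) (hA10 : A 1 0 = 0) (hB10 : B 1 0 = 0) (h00 : B 0 0 = A 0 0) : B ∈ H := by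
  have hBA : B * A⁻¹ ∈ (upperUnipotent (R := R)).range := by
    have hdet := A.det_fin_two_eq_one
    simp only [mem_range_upperUnipotent, coe_mul, coe_inv, adjugate_fin_two, mul_apply,
      Fin.sum_univ_two, of_apply, cons_val', cons_val_zero, cons_val_one, cons_val_fin_one,
      hA10, hB10, h00]
    constructor
    · linear_combination hdet + A 0 1 * hA10
    · ring
  simpa using H.mul_mem (hN hBA) hA

theorem conj_mem_of_apply_one_zero_eq_zero (hN : (upperUnipotent (R := R)).range ≤ H)
    (x : SL(2, R)) {A : SL(2, R)} (hA : A ∈ H) (hA10 : A 1 0 = 0)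
    (hc : x 1 1 * (A 0 0 - A 1 1) = x 1 0 * A 0 1) : x * A * x⁻¹ ∈ H := by
  obtain ⟨h10, h00⟩ := conj_apply_of_apply_one_zero_eq_zero x hA10
  rw [hc, sub_self, mul_zero] at h10 h00
  refine mem_of_apply_zero_zero_eq hN (H.inv_mem hA) ?_ h10 ?_ <;>
    simp [h00, coe_inv, adjugate_fin_two, hA10]

theorem disjoint_map_conj_range_upperUnipotent [IsDomain R] (hU : ∀ A ∈ H, A 1 0 = 0)
    {x : SL(2, R)} (hx : x 1 0 ≠ 0) :
    Disjoint (H.map (MulAut.conj x⁻¹).toMonoidHom) (upperUnipotent (R := R)).range := by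
  refine Subgroup.disjoint_def.mpr ?_
  rintro _ hmem ⟨t, rfl⟩
  have h10 := hU _ (Subgroup.mem_map_conj_iff.mp hmem)
  rw [inv_inv, (conj_apply_of_apply_one_zero_eq_zero x (by simp)).1] at h10
  have ht : t.toAdd = 0 := by simpa [hx] using h10
  rw [toAdd_eq_zero.mp ht, map_one]

end CommRing

section Field

variable {F : Type*} [Field F] {H : Subgroup SL(2, F)}

theorem inf_map_conj_mul_range_upperUnipotent (hU : ∀ A ∈ H, A 1 0 = 0)
    (hN : (upperUnipotent (R := F)).range ≤ H) {x : SL(2, F)} (hx : x 1 0 ≠ 0) :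
    ((H ⊓ H.map (MulAut.conj x⁻¹).toMonoidHom : Subgroup SL(2, F)) : Set SL(2, F)) *
      (upperUnipotent (R := F)).range = H := by
  refine Set.Subset.antisymm ?_ fun h hh => ?_
  · rintro _ ⟨k, hk, n, hn, rfl⟩
    exact H.mul_mem hk.1 (hN hn)
  have h10 := hU h hh
  have h00 : h 0 0 ≠ 0 := by
    intro h0
    simpa [h0, h10] using h.det_fin_two_eq_one
  -- `t` is chosen so that `x k x⁻¹` is again upper triangular
  set t : F := (x 1 0 * h 0 1 - x 1 1 * (h 0 0 - h 1 1)) / (x 1 0 * h 0 0)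
  have ht : t * (x 1 0 * h 0 0) = x 1 0 * h 0 1 - x 1 1 * (h 0 0 - h 1 1) :=
    div_mul_cancel₀ _ (mul_ne_zero hx h00)
  set k := h * upperUnipotent (Multiplicative.ofAdd (-t))
  have hkH : k ∈ H := H.mul_mem hh (hN ⟨_, rfl⟩)
  have hk : k 0 0 = h 0 0 ∧ k 0 1 = h 0 1 - h 0 0 * t ∧ k 1 0 = 0 ∧ k 1 1 = h 1 1 := by
    simp [k, mul_apply, Fin.sum_univ_two, h10, neg_add_eq_sub]
  refine ⟨k, ⟨hkH, Subgroup.mem_map_conj_iff.mpr ?_⟩, _, ⟨Multiplicative.ofAdd t, rfl⟩, ?_⟩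
  · rw [inv_inv]
    refine conj_mem_of_apply_one_zero_eq_zero hN x hkH hk.2.2.1 ?_
    rw [hk.1, hk.2.1, hk.2.2.2]
    linear_combination ht
  · show k * _ = h
    rw [mul_assoc, ← map_mul, ← ofAdd_add, neg_add_cancel, ofAdd_zero, map_one, mul_one]

theorem index_inf_map_conj_subgroupOf_eq_card (hU : ∀ A ∈ H, A 1 0 = 0)
    (hN : (upperUnipotent (R := F)).range ≤ H) {x : SL(2, F)} (hx : x 1 0 ≠ 0) :
    ((H ⊓ H.map (MulAut.conj x⁻¹).toMonoidHom).subgroupOf H).index = Nat.card F := by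
  rw [Subgroup.index_subgroupOf_eq_card_of_disjoint
      ((disjoint_map_conj_range_upperUnipotent hU hx).mono_left inf_le_right)
      (inf_map_conj_mul_range_upperUnipotent hU hN hx),
    ← Nat.card_congr (MonoidHom.ofInjective upperUnipotent_injective).toEquiv]
  exact Nat.card_congr Multiplicative.toAdd

end Field

end Matrix.SpecialLinearGroup

open Matrix.SpecialLinearGroup in
theorem stmt16_general {p : ℕ} (hp : p.Prime)
    (H : Subgroup (Matrix.SpecialLinearGroup (Fin 2) (ZMod p)))
    (hHU : ∀ A ∈ H, (A : Matrix (Fin 2) (Fin 2) (ZMod p)) 1 0 = 0)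
    (hNH : ∀ A : Matrix.SpecialLinearGroup (Fin 2) (ZMod p),
      (A : Matrix (Fin 2) (Fin 2) (ZMod p)) 0 0 = 1 →
      (A : Matrix (Fin 2) (Fin 2) (ZMod p)) 1 0 = 0 →
      (A : Matrix (Fin 2) (Fin 2) (ZMod p)) 1 1 = 1 → A ∈ H)
    (x : Matrix.SpecialLinearGroup (Fin 2) (ZMod p))
    (hx : (x : Matrix (Fin 2) (Fin 2) (ZMod p)) 1 0 ≠ 0) :
    ((H ⊓ Subgroup.map (MulAut.conj x⁻¹).toMonoidHom H).subgroupOf H).index = p ∧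
    ((H : Set (Matrix.SpecialLinearGroup (Fin 2) (ZMod p))) * {x} *
      (H : Set (Matrix.SpecialLinearGroup (Fin 2) (ZMod p)))).ncard = p * Nat.card H := by
  have : Fact p.Prime := ⟨hp⟩
  have hN : (upperUnipotent (R := ZMod p)).range ≤ H := by
    rintro _ ⟨t, rfl⟩
    exact hNH _ (by simp) (by simp) (by simp)
  have hindex : ((H ⊓ H.map (MulAut.conj x⁻¹).toMonoidHom).subgroupOf H).index = p := by
    rw [index_inf_map_conj_subgroupOf_eq_card hHU hN hx, Nat.card_zmod]
  exact ⟨hindex, by rw [Subgroup.ncard_mul_singleton_mul, hindex, mul_comm]⟩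

theorem stmt16 {p : ℕ} (hp : p.Prime) (hp5 : 5 ≤ p)
    (H : Subgroup (Matrix.SpecialLinearGroup (Fin 2) (ZMod p)))
    (hHU : ∀ A ∈ H, (A : Matrix (Fin 2) (Fin 2) (ZMod p)) 1 0 = 0)
    (hNH : ∀ A : Matrix.SpecialLinearGroup (Fin 2) (ZMod p),
      (A : Matrix (Fin 2) (Fin 2) (ZMod p)) 0 0 = 1 →
      (A : Matrix (Fin 2) (Fin 2) (ZMod p)) 1 0 = 0 →
      (A : Matrix (Fin 2) (Fin 2) (ZMod p)) 1 1 = 1 → A ∈ H)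
    (x : Matrix.SpecialLinearGroup (Fin 2) (ZMod p))
    (hx : (x : Matrix (Fin 2) (Fin 2) (ZMod p)) 1 0 ≠ 0) :
    ((H ⊓ Subgroup.map (MulAut.conj x⁻¹).toMonoidHom H).subgroupOf H).index = p ∧
    ((H : Set (Matrix.SpecialLinearGroup (Fin 2) (ZMod p))) * {x} *
      (H : Set (Matrix.SpecialLinearGroup (Fin 2) (ZMod p)))).ncard = p * Nat.card H :=
  stmt16_general hp H hHU hNH x hx
end
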